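/- arXiv:2407.21360 — 2 statements merged into one kernel-verified Lean document; each statement's English description precedes it below -/
import Mathlib

section
/- For every integer n ≥ 2, there exists a 4-colouring of F_{n^3} ⊠ F_{n^3} in which every monochromatic component has at most 7·n^2 vertices. -/
open SimpleGraph

universe u v

/-- The strong product of two simple graphs. -/
def StrongProd {α : Type u} {β : Type v} (G : SimpleGraph α) (H : SimpleGraph β) :
    SimpleGraph (α × β) where
  Adj x y := (x.1 = y.1 ∧ H.Adj x.2 y.2) ∨ (x.2 = y.2 ∧ G.Adj x.1 y.1) ∨
    (G.Adj x.1 y.1 ∧ H.Adj x.2 y.2)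
  symm := by
    constructor
    rintro x y (⟨h1, h2⟩ | ⟨h1, h2⟩ | ⟨h1, h2⟩)
    · exact Or.inl ⟨h1.symm, h2.symm⟩
    · exact Or.inr (Or.inl ⟨h1.symm, h2.symm⟩)
    · exact Or.inr (Or.inr ⟨h1.symm, h2.symm⟩)
  loopless := by
    constructor
    rintro x (⟨h1, h2⟩ | ⟨h1, h2⟩ | ⟨h1, h2⟩)
    · exact h2.ne rfl
    · exact h2.ne rfl
    · exact h1.ne rfl

/-- The fan graph `F_n`: a path on `n` vertices (vertices `1,…,n`) together with
one dominant vertex (vertex `0`) adjacent to all path vertices. -/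
def Fan (n : ℕ) : SimpleGraph (Fin (n + 1)) :=
  SimpleGraph.fromRel (fun u v => u = 0 ∨ u.val + 1 = v.val)

/-- The cone over `m` disjoint copies of `G`: `m` pairwise disjoint copies of `G`
together with one new vertex adjacent to every vertex of every copy. -/
def GraphCone {V : Type u} (m : ℕ) (G : SimpleGraph V) :
    SimpleGraph (Option (Fin m × V)) where
  Adj x y :=
    match x, y with
    | none, none => False
    | none, some _ => True
    | some _, none => True
    | some (i, _u), some (j, _v) => i = j ∧ G.Adj _u _v
  symm := by
    constructor
    rintro (_ | ⟨i, u⟩) (_ | ⟨j, v⟩) h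
    · exact h
    · trivial
    · trivial
    · exact ⟨h.1.symm, h.2.symm⟩
  loopless := by
    constructor
    rintro (_ | ⟨i, u⟩) h
    · exact h
    · exact h.2.ne rfl

/-- `G` has a tree-decomposition of width at most `t`. -/
def TreewidthLE {V : Type u} (G : SimpleGraph V) (t : ℕ) : Prop :=
  ∃ (ι : Type) (T : SimpleGraph ι) (W : ι → Finset V),
    T.IsTree ∧
    (∀ ⦃u v : V⦄, G.Adj u v → ∃ x, u ∈ W x ∧ v ∈ W x) ∧
    (∀ v : V, (T.induce {x | v ∈ W x}).Connected) ∧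
    (∀ x, (W x).card ≤ t + 1)

/-- A set of vertices is monochromatic under a colouring `f`. -/
def IsMonochromatic {V : Type u} {c : ℕ} (f : V → Fin c) (S : Finset V) : Prop :=
  ∀ u ∈ S, ∀ v ∈ S, f u = f v

/-- Every monochromatic component of the colouring `f` of `G` has at most `k` vertices. -/
def ClusterLE {V : Type u} {c : ℕ} (G : SimpleGraph V) (f : V → Fin c) (k : ℕ) : Prop :=
  ∀ S : Finset V, IsMonochromatic f S → (G.induce (S : Set V)).Connected → S.card ≤ k

/-- Every monochromatic component of the colouring `f` of `G` has at most `b` vertices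
(real-valued bound). -/
def ClusterLEReal {V : Type u} {c : ℕ} (G : SimpleGraph V) (f : V → Fin c) (b : ℝ) : Prop :=
  ∀ S : Finset V, IsMonochromatic f S → (G.induce (S : Set V)).Connected → (S.card : ℝ) ≤ b

/-!
Write a vertex as `(a, b)`, with `0` the apex of each fan. The rows `b ≥ 1` are cut into strips of
`n` consecutive rows, coloured `0` and `1` alternately. Inside strip `j` the columns
`a ≡ 1 + 2 (j mod 2) (mod 7n)` are colour-`2` walls: they cut the strip into bricks of fewer than
`7n` columns, hence fewer than `7n²` vertices, and walls of consecutive strips are two columns apart,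
so they never touch.

The apex column `a = 0` sees three consecutive rows completely; where these lie in a single strip it
takes the colour of the neighbouring strips, giving runs of `n - 2` vertices. The bottom row `b = 0`
sees the whole apex column, so it uses colour `2`, except at the columns next to a wall. Everything
else (the apex, two rows per strip boundary in the apex column, five columns per period `7n` in the
bottom row) gets colour `3` and forms one component of roughly `(2 + 5/7) n²` vertices.

So every vertex lies in a piece and has an index below `7n²` determining it inside its piece, and
adjacent vertices of equal colour lie in the same piece.
-/

theorem Nat.succ_div_mod_cases {m : ℕ} (hm : 0 < m) (x : ℕ) :
    ((x + 1) / m = x / m ∧ (x + 1) % m = x % m + 1) ∨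
      ((x + 1) / m = x / m + 1 ∧ (x + 1) % m = 0 ∧ x % m + 1 = m) := by
  have hx := Nat.div_add_mod x m
  have hx1 := Nat.div_add_mod (x + 1) m
  have := Nat.mod_lt x hm
  have := Nat.mod_lt (x + 1) hm
  rw [Nat.succ_div] at hx1 ⊢
  split_ifs at hx1 ⊢ with hdvd
  · have := Nat.mod_eq_zero_of_dvd hdvd
    rw [Nat.mul_add_one] at hx1
    omega
  · rw [Nat.add_zero] at hx1 ⊢
    omega

theorem Nat.div_mod_cases_of_near {m x y : ℕ} (hm : 0 < m) (h : x ≤ y + 1 ∧ y ≤ x + 1) :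
    (y / m = x / m ∧ y % m + x = x % m + y) ∨
      (y / m = x / m + 1 ∧ y % m = 0 ∧ x % m + 1 = m) ∨
      (x / m = y / m + 1 ∧ x % m = 0 ∧ y % m + 1 = m) := by
  obtain rfl | rfl | rfl : y = x ∨ y = x + 1 ∨ x = y + 1 := by omega
  · omega
  · have := Nat.succ_div_mod_cases hm x
    omega
  · have := Nat.succ_div_mod_cases hm y
    omega

theorem Nat.mod_eq_of_add_sub_mod_eq_zero {a m s : ℕ} (hs : s < m) (h : (a + (m - s)) % m = 0) :
    a % m = s := by
  have h' : a + (m - s) ≡ s + (m - s) [MOD m] := by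
    rw [Nat.add_sub_cancel' hs.le]
    exact h.trans (Nat.mod_self m).symm
  have h'' : a % m = s % m := Nat.ModEq.add_right_cancel' _ h'
  rwa [Nat.mod_eq_of_lt hs] at h''

theorem Nat.div_le_sq_of_le_cube {b n : ℕ} (hb : b ≤ n ^ 3) : b / n ≤ n ^ 2 :=
  Nat.div_le_of_le_mul (by rwa [← pow_succ'])

theorem ClusterLE.of_piece_index {V ι : Type*} {c k : ℕ} {G : SimpleGraph V} {f : V → Fin c}
    (piece : V → ι) (index : V → ℕ)
    (hpiece : ∀ u v, G.Adj u v → f u = f v → piece u = piece v)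
    (hindex : ∀ u v, piece u = piece v → index u = index v → u = v)
    (hlt : ∀ v, index v < k) : ClusterLE G f k := by
  intro S hmono hconn
  have hconst : ∀ u ∈ S, ∀ v ∈ S, piece u = piece v := by
    intro u hu v hv
    have hreach := (reachable_iff_reflTransGen _ _).1 (hconn.preconnected ⟨u, hu⟩ ⟨v, hv⟩)
    have := hreach.lift (fun w : (S : Set V) => piece w) fun x y hxy =>
      hpiece x y hxy (hmono x x.2 y y.2)
    rwa [Relation.reflTransGen_eq_self] at this
  calc S.card ≤ (Finset.range k).card :=
        Finset.card_le_card_of_injOn index (fun v _ => by simpa using hlt v)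
          fun u hu v hv huv => hindex u v (hconst u hu v hv) huv
    _ = k := Finset.card_range k

def FanNear (x y : ℕ) : Prop := x = 0 ∨ y = 0 ∨ (x ≤ y + 1 ∧ y ≤ x + 1)

theorem FanNear.symm {x y : ℕ} (h : FanNear x y) : FanNear y x := by
  unfold FanNear at h ⊢
  omega

theorem FanNear.le_succ {x y : ℕ} (h : FanNear x y) (hx : x ≠ 0) (hy : y ≠ 0) :
    x ≤ y + 1 ∧ y ≤ x + 1 := by
  unfold FanNear at h
  omega

theorem fanNear_of_fan_adj {N : ℕ} {x y : Fin (N + 1)} (h : (Fan N).Adj x y) : FanNear x y := by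
  rw [Fan, fromRel_adj] at h
  unfold FanNear
  rcases h.2 with (rfl | h) | (rfl | h)
  · exact Or.inl rfl
  · omega
  · exact Or.inr (Or.inl rfl)
  · omega

theorem fanNear_of_strongProd_adj {N : ℕ} {u v : Fin (N + 1) × Fin (N + 1)}
    (h : (StrongProd (Fan N) (Fan N)).Adj u v) : FanNear u.1 v.1 ∧ FanNear u.2 v.2 := by
  have hrefl (x : ℕ) : FanNear x x := by simp [FanNear]
  rcases h with ⟨h1, h2⟩ | ⟨h1, h2⟩ | ⟨h1, h2⟩
  · exact ⟨h1 ▸ hrefl _, fanNear_of_fan_adj h2⟩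
  · exact ⟨fanNear_of_fan_adj h2, h1 ▸ hrefl _⟩
  · exact ⟨fanNear_of_fan_adj h1, fanNear_of_fan_adj h2⟩

namespace BrickColouring

inductive Piece
  | hub
  | leftRun (j : ℕ)
  | bottomRun (k : ℕ)
  | wall (a j : ℕ)
  | brick (j c : ℕ)

def stripColour (j : ℕ) : Fin 4 := if j % 2 = 0 then 0 else 1

theorem stripColour_eq_iff {i j : ℕ} : stripColour i = stripColour j ↔ i % 2 = j % 2 := by
  unfold stripColour
  split_ifs <;> simp only [Fin.isValue, true_iff, one_ne_zero, zero_ne_one, false_iff] <;> omega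

theorem stripColour_succ_ne (j : ℕ) : stripColour (j + 1) ≠ stripColour j := by
  rw [Ne, stripColour_eq_iff]
  omega

theorem stripColour_ne_two (j : ℕ) : stripColour j ≠ 2 := by
  unfold stripColour
  split_ifs <;> decide

theorem stripColour_ne_three (j : ℕ) : stripColour j ≠ 3 := by
  unfold stripColour
  split_ifs <;> decide

def Piece.colour : Piece → Fin 4
  | .hub => 3
  | .leftRun j => stripColour (j + 1)
  | .bottomRun _ => 2
  | .wall _ _ => 2
  | .brick j _ => stripColour j

def wallPos (j : ℕ) : ℕ := 1 + 2 * (j % 2)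

variable (n : ℕ)

def piece (a b : ℕ) : Piece :=
  if a = 0 then
    if b % n = 0 ∨ b % n + 1 = n then .hub else .leftRun (b / n)
  else if b = 0 then
    if a % (7 * n) ≤ 4 then .hub else .bottomRun (a / (7 * n))
  else if a % (7 * n) = wallPos (b / n) then .wall a (b / n)
  -- the shift by `7n - wallPos j` moves the walls of strip `j` to the multiples of `7n`
  else .brick (b / n) ((a + (7 * n - wallPos (b / n))) / (7 * n))

variable {n} {a b : ℕ}

theorem piece_eq_hub_iff : piece n a b = .hub ↔
    a = 0 ∧ (b % n = 0 ∨ b % n + 1 = n) ∨ a ≠ 0 ∧ b = 0 ∧ a % (7 * n) ≤ 4 := by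
  unfold piece
  split_ifs <;> simp_all

theorem piece_eq_leftRun_iff {j : ℕ} : piece n a b = .leftRun j ↔
    a = 0 ∧ b % n ≠ 0 ∧ b % n + 1 ≠ n ∧ b / n = j := by
  unfold piece
  split_ifs <;> simp_all
  omega

theorem piece_eq_bottomRun_iff {k : ℕ} : piece n a b = .bottomRun k ↔
    a ≠ 0 ∧ b = 0 ∧ 4 < a % (7 * n) ∧ a / (7 * n) = k := by
  unfold piece
  split_ifs <;> simp_all

theorem piece_eq_wall_iff {w j : ℕ} : piece n a b = .wall w j ↔
    a ≠ 0 ∧ b ≠ 0 ∧ a % (7 * n) = wallPos (b / n) ∧ a = w ∧ b / n = j := by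
  unfold piece
  split_ifs <;> simp_all

theorem piece_eq_brick_iff {j c : ℕ} : piece n a b = .brick j c ↔
    a ≠ 0 ∧ b ≠ 0 ∧ a % (7 * n) ≠ wallPos (b / n) ∧ b / n = j ∧
      (a + (7 * n - wallPos j)) / (7 * n) = c := by
  unfold piece
  split_ifs <;> simp_all

variable {a' b' : ℕ}

theorem strip_eq_of_piece_eq_leftRun (hn : 0 < n) {j : ℕ} (hp : piece n a b = .leftRun j)
    (hb' : b' ≠ 0) (hbb : FanNear b b') : b' / n = j := by
  obtain ⟨-, h0, h1, rfl⟩ := piece_eq_leftRun_iff.1 hp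
  have hb : b ≠ 0 := by
    rintro rfl
    simp at h0
  have hnear := hbb.le_succ hb hb'
  have := Nat.div_mod_cases_of_near hn hnear
  omega

theorem bottomRun_eq_of_near (hn : 0 < n) {k k' : ℕ} (hp : piece n a b = .bottomRun k)
    (hp' : piece n a' b' = .bottomRun k') (haa : FanNear a a') : k = k' := by
  obtain ⟨ha, -, h4, rfl⟩ := piece_eq_bottomRun_iff.1 hp
  obtain ⟨ha', -, h4', rfl⟩ := piece_eq_bottomRun_iff.1 hp'
  have hnear := haa.le_succ ha ha'
  have := Nat.div_mod_cases_of_near (m := 7 * n) (by omega) hnear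
  omega

theorem not_fanNear_of_bottomRun_of_wall (hn : 0 < n) {k w j : ℕ}
    (hp : piece n a b = .bottomRun k) (hp' : piece n a' b' = .wall w j) : ¬FanNear a a' := by
  intro haa
  obtain ⟨ha, -, h4, -⟩ := piece_eq_bottomRun_iff.1 hp
  obtain ⟨ha', -, hw, -⟩ := piece_eq_wall_iff.1 hp'
  have hnear := haa.le_succ ha ha'
  have := Nat.div_mod_cases_of_near (m := 7 * n) (by omega) hnear
  unfold wallPos at hw
  omega

theorem wall_eq_of_near (hn : 0 < n) {w j w' j' : ℕ} (hp : piece n a b = .wall w j)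
    (hp' : piece n a' b' = .wall w' j') (haa : FanNear a a') (hbb : FanNear b b') :
    w = w' ∧ j = j' := by
  obtain ⟨ha, hb, hw, rfl, rfl⟩ := piece_eq_wall_iff.1 hp
  obtain ⟨ha', hb', hw', rfl, rfl⟩ := piece_eq_wall_iff.1 hp'
  have ha_near := haa.le_succ ha ha'
  have := Nat.div_mod_cases_of_near (m := 7 * n) (by omega) ha_near
  have hb_near := hbb.le_succ hb hb'
  have := Nat.div_mod_cases_of_near hn hb_near
  unfold wallPos at hw hw'
  omega

theorem brick_eq_of_near (hn : 0 < n) {j c j' c' : ℕ} (hp : piece n a b = .brick j c)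
    (hp' : piece n a' b' = .brick j' c') (hc : stripColour j = stripColour j')
    (haa : FanNear a a') (hbb : FanNear b b') : j = j' ∧ c = c' := by
  obtain ⟨ha, hb, hw, rfl, rfl⟩ := piece_eq_brick_iff.1 hp
  obtain ⟨ha', hb', hw', rfl, rfl⟩ := piece_eq_brick_iff.1 hp'
  have hj : b / n = b' / n := by
    have hnear := hbb.le_succ hb hb'
    have := Nat.div_mod_cases_of_near hn hnear
    rw [stripColour_eq_iff] at hc
    omega
  rw [← hj] at hw' ⊢
  have hpos : wallPos (b / n) < 7 * n := by unfold wallPos; omega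
  have hx := mt (Nat.mod_eq_of_add_sub_mod_eq_zero hpos) hw
  have hx' := mt (Nat.mod_eq_of_add_sub_mod_eq_zero hpos) hw'
  have hnear : a + (7 * n - wallPos (b / n)) ≤ a' + (7 * n - wallPos (b / n)) + 1 ∧
      a' + (7 * n - wallPos (b / n)) ≤ a + (7 * n - wallPos (b / n)) + 1 := by
    have := haa.le_succ ha ha'
    omega
  have := Nat.div_mod_cases_of_near (m := 7 * n) (by omega) hnear
  omega

theorem piece_eq_of_near (hn : 0 < n) (haa : FanNear a a') (hbb : FanNear b b')
    (hc : (piece n a b).colour = (piece n a' b').colour) : piece n a b = piece n a' b' := by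
  cases hp : piece n a b <;> cases hp' : piece n a' b' <;>
    simp only [hp, hp', Piece.colour, Fin.isValue, Fin.reduceEq, stripColour_ne_two,
      stripColour_ne_three, (stripColour_ne_two _).symm, (stripColour_ne_three _).symm,
      reduceCtorEq, Piece.leftRun.injEq, Piece.bottomRun.injEq, Piece.wall.injEq,
      Piece.brick.injEq] at hc ⊢
  case leftRun.leftRun j j' =>
    obtain ⟨-, h0, -, rfl⟩ := piece_eq_leftRun_iff.1 hp'
    exact (strip_eq_of_piece_eq_leftRun hn hp (by rintro rfl; simp at h0) hbb).symm
  case leftRun.brick j j' c =>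
    obtain ⟨-, hb', -, rfl, -⟩ := piece_eq_brick_iff.1 hp'
    rw [strip_eq_of_piece_eq_leftRun hn hp hb' hbb] at hc
    exact stripColour_succ_ne j hc
  case brick.leftRun j c j' =>
    obtain ⟨-, hb, -, rfl, -⟩ := piece_eq_brick_iff.1 hp
    rw [strip_eq_of_piece_eq_leftRun hn hp' hb hbb.symm] at hc
    exact stripColour_succ_ne j' hc.symm
  case bottomRun.bottomRun => exact bottomRun_eq_of_near hn hp hp' haa
  case bottomRun.wall => exact not_fanNear_of_bottomRun_of_wall hn hp hp' haa
  case wall.bottomRun => exact not_fanNear_of_bottomRun_of_wall hn hp' hp haa.symm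
  case wall.wall => exact wall_eq_of_near hn hp hp' haa hbb
  case brick.brick => exact brick_eq_of_near hn hp hp' hc haa hbb

variable (n) in
def index (a b : ℕ) : ℕ :=
  match piece n a b with
  -- the apex column first (two rows per strip boundary), then five columns per period `7n`
  | .hub =>
    if a = 0 then 2 * (b / n) + (if b % n = 0 then 0 else 1)
    else 2 * n ^ 2 + 2 + 5 * (a / (7 * n)) + a % (7 * n)
  | .leftRun _ | .wall _ _ => b % n
  | .bottomRun _ => a % (7 * n)
  | .brick j _ => n * ((a + (7 * n - wallPos j)) % (7 * n)) + b % n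

variable (n) in
def Piece.cell : Piece → ℕ → ℕ × ℕ
  | .hub, l =>
    if l < 2 * n ^ 2 + 2 then (0, n * (l / 2) + l % 2 * (n - 1))
    else (7 * n * ((l - (2 * n ^ 2 + 2)) / 5) + (l - (2 * n ^ 2 + 2)) % 5, 0)
  | .leftRun j, l => (0, n * j + l)
  | .bottomRun k, l => (7 * n * k + l, 0)
  | .wall a j, l => (a, n * j + l)
  | .brick j c, l => (7 * n * c + l / n - (7 * n - wallPos j), n * j + l % n)

theorem cell_piece_index (hn : 0 < n) (hb : b ≤ n ^ 3) :
    (piece n a b).cell n (index n a b) = (a, b) := by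
  have hdiv := Nat.div_add_mod b n
  cases hp : piece n a b with
  | hub =>
    rcases piece_eq_hub_iff.1 hp with ⟨rfl, hcol⟩ | ⟨ha, rfl, hrow⟩
    · have hq := Nat.div_le_sq_of_le_cube hb
      simp only [index, hp, Piece.cell, ↓reduceIte]
      rw [if_pos (by split_ifs <;> omega), Nat.mul_add_div two_pos, Nat.mul_add_mod]
      split_ifs <;> simp only [Nat.zero_div, Nat.reduceDiv, Nat.zero_mod, Nat.mod_succ, zero_mul,
        one_mul, add_zero, Prod.mk.injEq, true_and] <;> omega
    · have hr := Nat.div_add_mod a (7 * n)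
      have h5 : a % (7 * n) < 5 := by omega
      have hl : 2 * n ^ 2 + 2 + 5 * (a / (7 * n)) + a % (7 * n) - (2 * n ^ 2 + 2) =
          5 * (a / (7 * n)) + a % (7 * n) := by omega
      simp only [index, hp, Piece.cell, if_neg ha]
      rw [if_neg (by omega), hl, Nat.mul_add_div (by norm_num), Nat.mul_add_mod,
        Nat.div_eq_of_lt h5, Nat.mod_eq_of_lt h5]
      simp only [Nat.add_zero, hr]
  | leftRun j =>
    obtain ⟨rfl, -, -, rfl⟩ := piece_eq_leftRun_iff.1 hp
    simp only [index, hp, Piece.cell, hdiv]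
  | bottomRun k =>
    obtain ⟨-, rfl, -, rfl⟩ := piece_eq_bottomRun_iff.1 hp
    simp only [index, hp, Piece.cell, Nat.div_add_mod]
  | wall w j =>
    obtain ⟨-, -, -, rfl, rfl⟩ := piece_eq_wall_iff.1 hp
    simp only [index, hp, Piece.cell, hdiv]
  | brick j c =>
    obtain ⟨-, -, -, rfl, rfl⟩ := piece_eq_brick_iff.1 hp
    have hr := Nat.mod_lt (a + (7 * n - wallPos (b / n))) (show 0 < 7 * n by omega)
    have hbn := Nat.mod_lt b hn
    have hx := Nat.div_add_mod (a + (7 * n - wallPos (b / n))) (7 * n)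
    simp only [index, hp, Piece.cell, Nat.mul_add_div hn, Nat.mul_add_mod, Nat.div_eq_of_lt hbn,
      Nat.mod_eq_of_lt hbn, Nat.add_zero, hdiv, hx, Nat.add_sub_cancel]

theorem index_lt (hn : 2 ≤ n) (ha : a ≤ n ^ 3) (hb : b ≤ n ^ 3) : index n a b < 7 * n ^ 2 := by
  have hn2 : 4 ≤ n ^ 2 := by nlinarith
  have hnn : n ≤ n ^ 2 := by nlinarith
  have hbn := Nat.mod_lt b (show 0 < n by omega)
  cases hp : piece n a b with
  | hub =>
    rcases piece_eq_hub_iff.1 hp with ⟨rfl, -⟩ | ⟨ha0, -, h4⟩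
    · have := Nat.div_le_sq_of_le_cube hb
      simp only [index, hp, ↓reduceIte]
      split_ifs <;> omega
    · have hq : 7 * (a / (7 * n)) ≤ n ^ 2 := by
        rw [Nat.mul_comm 7 n, ← Nat.div_div_eq_div_mul]
        exact (Nat.mul_div_le _ 7).trans (Nat.div_le_sq_of_le_cube ha)
      simp only [index, hp, if_neg ha0]
      omega
  | leftRun _ | wall _ _ =>
    simp only [index, hp]
    omega
  | bottomRun _ =>
    have := Nat.mod_lt a (show 0 < 7 * n by omega)
    simp only [index, hp]
    omega
  | brick j _ =>
    have hr := Nat.mod_lt (a + (7 * n - wallPos j)) (show 0 < 7 * n by omega)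
    simp only [index, hp]
    calc n * ((a + (7 * n - wallPos j)) % (7 * n)) + b % n
        < n * ((a + (7 * n - wallPos j)) % (7 * n) + 1) := by rw [Nat.mul_succ]; omega
      _ ≤ n * (7 * n) := Nat.mul_le_mul_left _ hr
      _ = 7 * n ^ 2 := by ring

end BrickColouring

open BrickColouring in
/-- For `n ≥ 2`, there is a 4-colouring of `F_{n³} ⊠ F_{n³}` with every monochromatic
component of size at most `7n²`. -/
theorem four_colour_fan_upper (n : ℕ) (hn : 2 ≤ n) :
    ∃ f : Fin (n ^ 3 + 1) × Fin (n ^ 3 + 1) → Fin 4,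
      ClusterLE (StrongProd (Fan (n ^ 3)) (Fan (n ^ 3))) f (7 * n ^ 2) := by
  have hle (x : Fin (n ^ 3 + 1)) : (x : ℕ) ≤ n ^ 3 := Nat.lt_succ_iff.mp x.isLt
  refine ⟨fun v => (piece n v.1 v.2).colour,
    ClusterLE.of_piece_index (fun v => piece n v.1 v.2) (fun v => index n v.1 v.2) ?_ ?_ ?_⟩
  · intro u v huv hc
    obtain ⟨h1, h2⟩ := fanNear_of_strongProd_adj huv
    exact piece_eq_of_near (by omega) h1 h2 hc
  · intro u v hp hi
    have hu := cell_piece_index (a := u.1) (by omega) (hle u.2)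
    rw [hp, hi, cell_piece_index (by omega) (hle v.2), Prod.mk.injEq] at hu
    exact Prod.ext (Fin.ext hu.1.symm) (Fin.ext hu.2.symm)
  · intro v
    exact index_lt hn (hle v.1) (hle v.2)
end

section
/- For any positive integers t, Δ and any graphs H1, H2 each with treewidth at most t and maximum degree at most Δ, the strong product H1 ⊠ H2 has a 4-colouring in which every monochromatic component has at most O(t²Δ²) vertices (a bound depending only on t and Δ, independent of |V(H1 ⊠ H2)|). -/
/-!
A connected monochromatic set of the product colouring `(f₁, f₂)` of `H₁ ⊠ H₂` projects onto
connected monochromatic sets of `H₁` and `H₂` and lies in the product of the projections, so it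
suffices to 2-colour each factor with clusters of size `O(tΔ)`.

For a factor, the bags of a tree decomposition are balanced separators of size `t + 1`. With
them one builds, level by level, a layering `g : V → ℕ` (adjacent vertices on the same or
consecutive levels) whose levels have components of size `O(tΔ)`: the current level `R` is
enlarged by separators until every component of the rest has `O(tΔ)` vertices adjacent to `R`,
and these vertices seed the next level inside that component. A set that is connected and
monochromatic for the parity of `g` stays on one level.
-/

open SimpleGraph

universe u v

open Finset Function
open scoped Classical

theorem Finset.nonempty_inter_of_lt_two_mul {V : Type*} {A B U X : Finset V} (hA : A ⊆ U)
    (hB : B ⊆ U) (hA' : #(X ∩ U) < 2 * #(X ∩ A)) (hB' : #(X ∩ U) < 2 * #(X ∩ B)) :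
    (A ∩ B).Nonempty := by
  by_contra hAB
  have hdisj : Disjoint (X ∩ A) (X ∩ B) :=
    (disjoint_iff_inter_eq_empty.mpr (not_nonempty_iff_eq_empty.mp hAB)).mono
      inter_subset_right inter_subset_right
  have : #(X ∩ A) + #(X ∩ B) ≤ #(X ∩ U) := by
    rw [← card_union_of_disjoint hdisj, ← inter_union_distrib_left]
    exact card_le_card (inter_subset_inter_left (union_subset hA hB))
  omega

/-- Two numbers exceeding `c` already account for `2c` of `n`; a single one is at most `n / 2`. -/
theorem Finset.sum_tsub_le_of_two_mul_le {ι : Type*} (s : Finset ι) (f : ι → ℕ) {n c : ℕ}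
    (hf : ∀ i ∈ s, 2 * f i ≤ n) (hsum : ∑ i ∈ s, f i ≤ n) (hc : 2 * c ≤ n) :
    ∑ i ∈ s, (f i - c) ≤ n - 2 * c := by
  set P := s.filter fun i => c < f i
  have hP : ∑ i ∈ s, (f i - c) = ∑ i ∈ P, (f i - c) :=
    (sum_filter_of_ne fun i _ h => by omega).symm
  rw [hP]
  rcases Nat.lt_or_ge #P 2 with hP1 | hP2
  · rcases P.eq_empty_or_nonempty with hP0 | ⟨i, hi⟩
    · simp [hP0]
    · have hPi : P = {i} := eq_singleton_iff_unique_mem.mpr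
        ⟨hi, fun j hj => card_le_one.mp (by omega) j hj i hi⟩
      have := hf i (mem_filter.mp hi).1
      rw [hPi, sum_singleton]
      omega
  · have hPc : ∀ i ∈ P, c ≤ f i := fun i hi => (mem_filter.mp hi).2.le
    have : ∑ i ∈ P, f i ≤ n := (sum_le_sum_of_subset (filter_subset _ s)).trans hsum
    rw [sum_tsub_distrib P hPc, sum_const, smul_eq_mul]
    have : 2 * c ≤ #P * c := Nat.mul_le_mul_right c hP2
    omega

namespace SimpleGraph

variable {V : Type*} {G : SimpleGraph V}

def ReachIn (G : SimpleGraph V) (U : Set V) (a b : V) : Prop :=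
  ∃ p : G.Walk a b, ∀ x ∈ p.support, x ∈ U

namespace ReachIn

variable {U U' : Set V} {a b c : V}

theorem refl (ha : a ∈ U) : G.ReachIn U a a :=
  ⟨Walk.nil, by simpa using ha⟩

theorem symm (h : G.ReachIn U a b) : G.ReachIn U b a := by
  obtain ⟨p, hp⟩ := h
  exact ⟨p.reverse, fun x hx => hp x (by simpa using hx)⟩

theorem trans (h : G.ReachIn U a b) (h' : G.ReachIn U b c) : G.ReachIn U a c := by
  obtain ⟨p, hp⟩ := h
  obtain ⟨q, hq⟩ := h'
  refine ⟨p.append q, fun x hx => ?_⟩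
  rcases (Walk.mem_support_append_iff _ _).mp hx with hx | hx
  exacts [hp x hx, hq x hx]

theorem mono (hU : U ⊆ U') (h : G.ReachIn U a b) : G.ReachIn U' a b :=
  h.imp fun _ hp x hx => hU (hp x hx)

theorem right_mem (h : G.ReachIn U a b) : b ∈ U :=
  h.elim fun p hp => hp b p.end_mem_support

theorem cons (hab : G.Adj a b) (ha : a ∈ U) (h : G.ReachIn U b c) : G.ReachIn U a c := by
  obtain ⟨p, hp⟩ := h
  refine ⟨Walk.cons hab p, fun x hx => ?_⟩
  rw [Walk.support_cons, List.mem_cons] at hx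
  rcases hx with rfl | hx
  exacts [ha, hp x hx]

theorem of_adj (hab : G.Adj a b) (ha : a ∈ U) (hb : b ∈ U) : G.ReachIn U a b :=
  cons hab ha (refl hb)

theorem of_mem_support {p : G.Walk a b} (hp : ∀ x ∈ p.support, x ∈ U) {x : V}
    (hx : x ∈ p.support) : G.ReachIn U a x :=
  ⟨p.takeUntil x hx, fun y hy => hp y (p.support_takeUntil_subset_support hx hy)⟩

theorem of_induce_walk {a b : U} (p : (G.induce U).Walk a b) : G.ReachIn U a b := by
  induction p with
  | nil => exact refl (Subtype.coe_prop _)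
  | cons h _ ih => exact cons h (Subtype.coe_prop _) ih

theorem of_induce_connected (h : (G.induce U).Connected) (ha : a ∈ U) (hb : b ∈ U) :
    G.ReachIn U a b :=
  (h.preconnected ⟨a, ha⟩ ⟨b, hb⟩).elim of_induce_walk

theorem image {W : Type*} {H : SimpleGraph W} (φ : V → W)
    (hφ : ∀ a b, G.Adj a b → φ a = φ b ∨ H.Adj (φ a) (φ b)) {S : Finset V}
    (h : G.ReachIn S a b) : H.ReachIn (S.image φ) (φ a) (φ b) := by
  obtain ⟨p, hp⟩ := h
  induction p with
  | nil => exact refl (by simpa using ⟨_, hp _ (by simp), rfl⟩)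
  | @cons a b c hab q ih =>
    have ha : φ a ∈ S.image φ := mem_image_of_mem φ (hp a (by simp))
    have hq := ih fun x hx => hp x (by simp [hx])
    rcases hφ a b hab with h | h
    · rwa [h]
    · exact cons h (by exact_mod_cast ha) hq

end ReachIn

section Components

variable {U A B M Z : Finset V} {u v w x : V}

noncomputable def compIn (G : SimpleGraph V) (U : Finset V) (v : V) : Finset V :=
  {w ∈ U | G.ReachIn U v w}

theorem mem_compIn : w ∈ G.compIn U v ↔ G.ReachIn U v w :=
  ⟨fun h => (mem_filter.mp h).2, fun h => mem_filter.mpr ⟨h.right_mem, h⟩⟩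

theorem compIn_subset : G.compIn U v ⊆ U :=
  filter_subset _ _

theorem mem_compIn_self (hv : v ∈ U) : v ∈ G.compIn U v :=
  mem_compIn.mpr (.refl (mem_coe.mpr hv))

theorem compIn_eq_of_mem (h : w ∈ G.compIn U v) : G.compIn U w = G.compIn U v := by
  have h := mem_compIn.mp h
  ext x
  simp only [mem_compIn]
  exact ⟨h.trans, h.symm.trans⟩

theorem compIn_eq_or_disjoint (v w : V) :
    G.compIn U v = G.compIn U w ∨ Disjoint (G.compIn U v) (G.compIn U w) := by
  refine or_iff_not_imp_right.mpr fun h => ?_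
  obtain ⟨x, hxv, hxw⟩ := not_disjoint_iff.mp h
  exact (compIn_eq_of_mem hxv).symm.trans (compIn_eq_of_mem hxw)

theorem mem_compIn_of_adj (hw : w ∈ G.compIn U v) (hadj : G.Adj w x) (hx : x ∈ U) :
    x ∈ G.compIn U v :=
  mem_compIn.mpr ((mem_compIn.mp hw).trans (.of_adj hadj (compIn_subset hw) hx))

theorem subset_compIn (hMU : M ⊆ U) (hM : ∀ w ∈ M, G.ReachIn M u w) : M ⊆ G.compIn U u :=
  fun w hw => mem_compIn.mpr ((hM w hw).mono (coe_subset.mpr hMU))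

theorem compIn_of_subset (hBA : B ⊆ A) : G.compIn B v = G.compIn (G.compIn A v ∩ B) v := by
  ext w
  simp only [mem_compIn]
  refine ⟨fun ⟨p, hp⟩ => ⟨p, fun x hx => ?_⟩, .mono (by simp)⟩
  have hvx : G.ReachIn A v x := (ReachIn.of_mem_support hp hx).mono (coe_subset.mpr hBA)
  exact mem_coe.mpr (mem_inter.mpr ⟨mem_compIn.mpr hvx, hp x hx⟩)

theorem compIn_compIn : G.compIn (G.compIn A v) v = G.compIn A v := by
  conv_rhs => rw [compIn_of_subset subset_rfl, inter_eq_left.mpr compIn_subset]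

theorem reachIn_compIn (hu : u ∈ G.compIn A v) (hw : w ∈ G.compIn A v) :
    G.ReachIn (G.compIn A v) u w := by
  rw [← compIn_eq_of_mem hu, ← compIn_compIn] at hw
  rw [← compIn_eq_of_mem hu]
  exact mem_compIn.mp hw

noncomputable def comps (G : SimpleGraph V) (A : Finset V) : Finset (Finset V) :=
  A.image (G.compIn A)

theorem mem_comps {C : Finset V} : C ∈ G.comps A ↔ ∃ v ∈ A, G.compIn A v = C :=
  mem_image

theorem sum_card_inter_comps_le (X A : Finset V) :
    ∑ C ∈ G.comps A, #(X ∩ C) ≤ #(X ∩ A) := by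
  rw [← card_biUnion]
  · refine card_le_card (biUnion_subset.mpr fun C hC => ?_)
    obtain ⟨v, -, rfl⟩ := mem_comps.mp hC
    exact inter_subset_inter_left compIn_subset
  · intro C hC D hD hCD
    obtain ⟨v, -, rfl⟩ := mem_comps.mp hC
    obtain ⟨w, -, rfl⟩ := mem_comps.mp hD
    exact ((compIn_eq_or_disjoint v w).resolve_left hCD).mono inter_subset_right
      inter_subset_right

theorem comps_sdiff_subset (hZ : Z ⊆ G.compIn A v) :
    G.comps (A \ Z) ⊆ (G.comps A).erase (G.compIn A v) ∪ G.comps (G.compIn A v \ Z) := by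
  intro C hC
  obtain ⟨w, hw, rfl⟩ := mem_comps.mp hC
  obtain ⟨hwA, hwZ⟩ := mem_sdiff.mp hw
  rw [compIn_of_subset sdiff_subset, mem_union]
  by_cases hwv : w ∈ G.compIn A v
  · right
    rw [compIn_eq_of_mem hwv, ← inter_sdiff_assoc, inter_eq_left.mpr compIn_subset]
    exact mem_comps.mpr ⟨w, mem_sdiff.mpr ⟨hwv, hwZ⟩, rfl⟩
  · left
    have hdisj : Disjoint (G.compIn A w) (G.compIn A v) :=
      (compIn_eq_or_disjoint w v).resolve_left fun h => hwv (h ▸ mem_compIn_self hwA)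
    have hsub : G.compIn A w ⊆ A \ Z := fun x hx =>
      mem_sdiff.mpr ⟨compIn_subset hx, fun hxZ => Finset.disjoint_left.mp hdisj hx (hZ hxZ)⟩
    rw [inter_eq_left.mpr hsub, compIn_compIn]
    exact mem_erase.mpr ⟨fun h => hwv (h ▸ mem_compIn_self hwA), mem_comps.mpr ⟨w, hwA, rfl⟩⟩

end Components

section Neighbourhoods

variable [Fintype V] {A X Z : Finset V} {v w : V}

noncomputable def nbhd (G : SimpleGraph V) (X : Finset V) : Finset V :=
  {w | ∃ x ∈ X, G.Adj x w}

theorem mem_nbhd : w ∈ G.nbhd X ↔ ∃ x ∈ X, G.Adj x w := by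
  simp [nbhd]

theorem nbhd_union : G.nbhd (X ∪ Z) = G.nbhd X ∪ G.nbhd Z := by
  ext w
  simp only [mem_nbhd, mem_union, or_and_right, exists_or]

theorem card_nbhd_le {d : ℕ} (hdeg : ∀ v, (G.neighborSet v).ncard ≤ d) (X : Finset V) :
    #(G.nbhd X) ≤ #X * d := by
  have hsub : G.nbhd X ⊆ X.biUnion fun x => (G.neighborSet x).toFinset := by
    intro w hw
    obtain ⟨x, hx, hxw⟩ := mem_nbhd.mp hw
    exact mem_biUnion.mpr ⟨x, hx, by simpa using hxw⟩
  calc #(G.nbhd X) ≤ ∑ x ∈ X, #(G.neighborSet x).toFinset :=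
        (card_le_card hsub).trans card_biUnion_le
    _ ≤ #X • d := sum_le_card_nsmul _ _ _ fun x _ => by
        rw [← Set.ncard_eq_toFinset_card']; exact hdeg x
    _ = #X * d := smul_eq_mul _ _

theorem nbhd_inter_subset_compIn (hX : X ⊆ G.compIn A v) : G.nbhd X ∩ A ⊆ G.compIn A v := by
  intro w hw
  obtain ⟨hw, hwA⟩ := mem_inter.mp hw
  obtain ⟨x, hx, hxw⟩ := mem_nbhd.mp hw
  exact mem_compIn_of_adj (hX hx) hxw hwA

end Neighbourhoods

theorem IsTree.not_reachIn_of_adj {ι : Type*} {T : SimpleGraph ι} (hT : T.IsTree) {x y z : ι}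
    (hxy : T.Adj x y) (hy : T.ReachIn {w | w ≠ x} y z) (hx : T.ReachIn {w | w ≠ y} x z) :
    False := by
  obtain ⟨p, hp⟩ := hy
  obtain ⟨q, hq⟩ := hx
  have hxp : x ∉ p.bypass.support := fun h => hp x (p.support_bypass_subset_support h) rfl
  have hyq : y ∉ q.bypass.support := fun h => hq y (q.support_bypass_subset_support h) rfl
  have hpq : p.bypass = .cons hxy.symm q.bypass := congrArg Subtype.val
    ((hT.isAcyclic.subsingleton_path y z).elim ⟨_, p.bypass_isPath⟩
      ⟨_, q.bypass_isPath.cons hyq⟩)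
  apply hxp
  rw [hpq, Walk.support_cons]
  exact List.mem_cons_of_mem _ q.bypass.start_mem_support

section TreeDecomposition

variable {ι : Type*} {T : SimpleGraph ι} {W : ι → Finset V}

theorem reachIn_of_mem_bags (hTrace : ∀ v : V, (T.induce {x | v ∈ W x}).Connected)
    {u : V} {x z z' : ι} (hz : u ∈ W z) (hz' : u ∈ W z') (hux : u ∉ W x) :
    T.ReachIn {y | y ≠ x} z z' :=
  (ReachIn.of_induce_connected (hTrace u) hz hz').mono fun _ hi h => hux (h ▸ hi)

theorem reachIn_of_walk_avoiding_bag (hEdge : ∀ ⦃u v : V⦄, G.Adj u v → ∃ x, u ∈ W x ∧ v ∈ W x)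
    (hTrace : ∀ v : V, (T.induce {x | v ∈ W x}).Connected) {x : ι} {u w : V}
    (p : G.Walk u w) (hp : ∀ y ∈ p.support, y ∉ W x) {z z' : ι} (hz : u ∈ W z)
    (hz' : w ∈ W z') : T.ReachIn {y | y ≠ x} z z' := by
  induction p generalizing z with
  | nil => exact reachIn_of_mem_bags hTrace hz hz' (hp _ (by simp))
  | @cons a b c hab q ih =>
    obtain ⟨y, hay, hby⟩ := hEdge hab
    exact (reachIn_of_mem_bags hTrace hz hay (hp a (by simp))).trans
      (ih (fun v hv => hp v (by simp [hv])) hby hz')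

theorem compIn_sdiff_bag_subset (hT : T.IsTree)
    (hEdge : ∀ ⦃u v : V⦄, G.Adj u v → ∃ x, u ∈ W x ∧ v ∈ W x)
    (hTrace : ∀ v : V, (T.induce {x | v ∈ W x}).Connected) {U : Finset V} {x y z : ι}
    {a b : V} (hxy : T.Adj x y) (hyz : T.ReachIn {w | w ≠ x} y z)
    (hb : b ∈ G.compIn (U \ W x) a) (hbz : b ∈ W z) (ha : a ∈ U \ W y) :
    G.compIn (U \ W y) a ⊆ G.compIn (U \ W x) a := by
  obtain ⟨⟨z₀, ha₀⟩⟩ := (hTrace a).nonempty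
  -- Otherwise the nodes of `a` would be joined to `x` avoiding `y` and to `y` avoiding `x`.
  have havoid : ∀ w ∈ G.compIn (U \ W y) a, w ∉ W x := by
    intro w hw hwx
    obtain ⟨p, hp⟩ := mem_compIn.mp hw
    obtain ⟨q, hq⟩ := mem_compIn.mp hb
    have hx : T.ReachIn {w | w ≠ y} z₀ x := reachIn_of_walk_avoiding_bag hEdge hTrace p
      (fun v hv => (mem_sdiff.mp (hp v hv)).2) ha₀ hwx
    have hz₀ : T.ReachIn {w | w ≠ x} z₀ z := reachIn_of_walk_avoiding_bag hEdge hTrace q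
      (fun v hv => (mem_sdiff.mp (hq v hv)).2) ha₀ hbz
    exact hT.not_reachIn_of_adj hxy (hyz.trans hz₀.symm) hx.symm
  refine subset_compIn (fun w hw => ?_) fun w hw => reachIn_compIn (mem_compIn_self ha) hw
  exact mem_sdiff.mpr ⟨(mem_sdiff.mp (compIn_subset hw)).1, havoid w hw⟩

theorem exists_balanced_bag (hT : T.IsTree)
    (hEdge : ∀ ⦃u v : V⦄, G.Adj u v → ∃ x, u ∈ W x ∧ v ∈ W x)
    (hTrace : ∀ v : V, (T.induce {x | v ∈ W x}).Connected) (U X : Finset V) :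
    ∃ x, ∀ v ∈ U \ W x, 2 * #(X ∩ G.compIn (U \ W x) v) ≤ #(X ∩ U) := by
  by_contra! hheavy
  choose v hvU hv using hheavy
  set C : ι → Finset V := fun x => G.compIn (U \ W x) (v x)
  have hCU : ∀ x, C x ⊆ U \ W x := fun x => compIn_subset
  have hstep : ∀ x y z, T.Adj x y → T.ReachIn {w | w ≠ x} y z → (∃ u ∈ C x, u ∈ W z) →
      C y ⊆ C x := by
    rintro x y z hxy hyz ⟨u, hu, huz⟩
    obtain ⟨a, ha⟩ := nonempty_inter_of_lt_two_mul
      ((hCU x).trans sdiff_subset) ((hCU y).trans sdiff_subset) (hv x) (hv y)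
    obtain ⟨hax, hay⟩ := mem_inter.mp ha
    have hCx : C x = G.compIn (U \ W x) a := (compIn_eq_of_mem hax).symm
    have hCy : C y = G.compIn (U \ W y) a := (compIn_eq_of_mem hay).symm
    rw [hCx, hCy]
    exact compIn_sdiff_bag_subset hT hEdge hTrace hxy hyz (hCx ▸ hu) huz (hCU y hay)
  -- Walking from a node with a smallest heavy component towards a bag meeting that component
  -- never changes the component, so it would have to meet its own bag.
  have hdescent : ∀ x z (p : T.Walk x z), p.IsPath → (∀ y, #(C x) ≤ #(C y)) →
      (∃ u ∈ C x, u ∈ W z) → False := by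
    intro x z p
    induction p with
    | nil => exact fun _ _ ⟨u, hu, huz⟩ => (mem_sdiff.mp (hCU _ hu)).2 huz
    | @cons x y z hxy q ih =>
      intro hp hmin hz
      rw [Walk.cons_isPath_iff] at hp
      have hyz : T.ReachIn {w | w ≠ x} y z := ⟨q, fun w hw h => hp.2 (h ▸ hw)⟩
      have hC : C y = C x := eq_of_subset_of_card_le (hstep x y z hxy hyz hz) (hmin y)
      exact ih hp.1 (hC ▸ hmin) (hC ▸ hz)
  have : Nonempty ι := hT.connected.nonempty
  set x₀ := argmin fun x => #(C x)
  obtain ⟨⟨z, hz⟩⟩ := (hTrace (v x₀)).nonempty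
  obtain ⟨p, hp⟩ := (hT.connected.preconnected x₀ z).exists_isPath
  exact hdescent x₀ z p hp (fun y => argmin_le (fun x => #(C x)) y)
    ⟨v x₀, mem_compIn_self (hvU x₀), hz⟩

end TreeDecomposition

def HasBalancedSeparators (G : SimpleGraph V) (k : ℕ) : Prop :=
  ∀ U X : Finset V, ∃ Z ⊆ U, #Z ≤ k ∧ ∀ v ∈ U \ Z, 2 * #(X ∩ G.compIn (U \ Z) v) ≤ #(X ∩ U)

theorem _root_.TreewidthLE.hasBalancedSeparators {t : ℕ} (h : TreewidthLE G t) :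
    G.HasBalancedSeparators (t + 1) := by
  obtain ⟨ι, T, W, hT, hEdge, hTrace, hcard⟩ := h
  intro U X
  obtain ⟨x, hx⟩ := exists_balanced_bag hT hEdge hTrace U X
  refine ⟨W x ∩ U, inter_subset_right, (card_le_card inter_subset_left).trans (hcard x), ?_⟩
  rwa [sdiff_inter_self_right]

section Seeds

variable [Fintype V] {k d : ℕ}

/-- The seeds of a component `C` of `U \ R` are its vertices adjacent to `R`. -/
noncomputable def seedExcess (G : SimpleGraph V) (m : ℕ) (U R : Finset V) : ℕ :=
  ∑ C ∈ G.comps (U \ R), (#(G.nbhd R ∩ C) - 2 * m)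

theorem seedExcess_le_card_nbhd (m : ℕ) (U R : Finset V) :
    G.seedExcess m U R ≤ #(G.nbhd R) :=
  calc G.seedExcess m U R ≤ ∑ C ∈ G.comps (U \ R), #(G.nbhd R ∩ C) :=
        sum_le_sum fun _ _ => Nat.sub_le _ _
    _ ≤ #(G.nbhd R ∩ (U \ R)) := sum_card_inter_comps_le _ _
    _ ≤ #(G.nbhd R) := card_le_card inter_subset_left

/-- The balanced separator `Z` halves the old seeds of `C₀` and adds at most `kd` new ones. -/
theorem sum_excess_comps_sdiff_add_le (hdeg : ∀ X : Finset V, #(G.nbhd X) ≤ #X * d) {R C₀ Z : Finset V}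
    (hZk : #Z ≤ k) (hbal : ∀ v ∈ C₀ \ Z,
      2 * #(G.nbhd R ∩ G.compIn (C₀ \ Z) v) ≤ #(G.nbhd R ∩ C₀))
    (hheavy : 6 * (k * d) < #(G.nbhd R ∩ C₀)) :
    ∑ D ∈ G.comps (C₀ \ Z), (#(G.nbhd (R ∪ Z) ∩ D) - 2 * (k * d)) + 3 * (k * d) ≤
      #(G.nbhd R ∩ C₀) := by
  set 𝒟 := G.comps (C₀ \ Z)
  have hold : ∑ D ∈ 𝒟, (#(G.nbhd R ∩ D) - 2 * (k * d)) ≤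
      #(G.nbhd R ∩ C₀) - 2 * (2 * (k * d)) := by
    refine sum_tsub_le_of_two_mul_le 𝒟 _ (fun D hD => ?_) ?_ (by omega)
    · obtain ⟨v, hv, rfl⟩ := mem_comps.mp hD
      exact hbal v hv
    · exact (sum_card_inter_comps_le _ _).trans
        (card_le_card (inter_subset_inter_left sdiff_subset))
  have hnew : ∑ D ∈ 𝒟, #(G.nbhd Z ∩ D) ≤ k * d :=
    calc ∑ D ∈ 𝒟, #(G.nbhd Z ∩ D) ≤ #(G.nbhd Z ∩ (C₀ \ Z)) := sum_card_inter_comps_le _ _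
      _ ≤ #Z * d := (card_le_card inter_subset_left).trans (hdeg Z)
      _ ≤ k * d := Nat.mul_le_mul_right d hZk
  have hsplit : ∀ D, #(G.nbhd (R ∪ Z) ∩ D) - 2 * (k * d) ≤
      (#(G.nbhd R ∩ D) - 2 * (k * d)) + #(G.nbhd Z ∩ D) := fun D => by
    have : #(G.nbhd (R ∪ Z) ∩ D) ≤ #(G.nbhd R ∩ D) + #(G.nbhd Z ∩ D) := by
      rw [nbhd_union, union_inter_distrib_right]
      exact card_union_le _ _
    omega
  have := (sum_le_sum fun D (_ : D ∈ 𝒟) => hsplit D).trans_eq sum_add_distrib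
  omega

theorem exists_seedExcess_add_le (hsep : G.HasBalancedSeparators k)
    (hdeg : ∀ X : Finset V, #(G.nbhd X) ≤ #X * d) {U R : Finset V} {v₀ : V}
    (hv₀ : v₀ ∈ U \ R) (hheavy : 6 * (k * d) < #(G.nbhd R ∩ G.compIn (U \ R) v₀)) :
    ∃ Z ⊆ U \ R, #Z ≤ k ∧ G.seedExcess (k * d) U (R ∪ Z) + k * d ≤ G.seedExcess (k * d) U R := by
  set A := U \ R
  set C₀ := G.compIn A v₀
  obtain ⟨Z, hZC₀, hZk, hbal⟩ := hsep C₀ (G.nbhd R)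
  refine ⟨Z, hZC₀.trans compIn_subset, hZk, ?_⟩
  have hunchanged : ∀ C ∈ (G.comps A).erase C₀, #(G.nbhd (R ∪ Z) ∩ C) = #(G.nbhd R ∩ C) := by
    intro C hC
    obtain ⟨hCC₀, hC⟩ := mem_erase.mp hC
    obtain ⟨v, -, rfl⟩ := mem_comps.mp hC
    have hdisj : Disjoint (G.compIn A v) C₀ := (compIn_eq_or_disjoint v v₀).resolve_left hCC₀
    have hZC : G.nbhd Z ∩ G.compIn A v = ∅ := by
      refine eq_empty_of_forall_notMem fun w hw => Finset.disjoint_left.mp hdisj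
        (mem_inter.mp hw).2 (nbhd_inter_subset_compIn hZC₀ ?_)
      exact mem_inter.mpr ⟨(mem_inter.mp hw).1, compIn_subset (mem_inter.mp hw).2⟩
    rw [nbhd_union, union_inter_distrib_right, hZC, union_empty]
  have hpieces := sum_excess_comps_sdiff_add_le hdeg hZk hbal hheavy
  have hUA : U \ (R ∪ Z) = A \ Z := sdiff_sdiff_left.symm
  have hC₀ : C₀ ∈ G.comps A := mem_comps.mpr ⟨v₀, hv₀, rfl⟩
  unfold seedExcess
  rw [hUA, ← add_sum_erase _ _ hC₀, ← sum_congr rfl fun C hC =>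
    congrArg (· - 2 * (k * d)) (hunchanged C hC)]
  calc ∑ C ∈ G.comps (A \ Z), (#(G.nbhd (R ∪ Z) ∩ C) - 2 * (k * d)) + k * d
      ≤ ∑ C ∈ (G.comps A).erase C₀ ∪ G.comps (C₀ \ Z), (#(G.nbhd (R ∪ Z) ∩ C) - 2 * (k * d))
          + k * d :=
        Nat.add_le_add_right (sum_le_sum_of_subset (comps_sdiff_subset hZC₀)) _
    _ ≤ ∑ C ∈ (G.comps A).erase C₀, (#(G.nbhd (R ∪ Z) ∩ C) - 2 * (k * d))
          + ∑ D ∈ G.comps (C₀ \ Z), (#(G.nbhd (R ∪ Z) ∩ D) - 2 * (k * d)) + k * d :=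
        Nat.add_le_add_right (le_self_add.trans_eq sum_union_inter) _
    _ ≤ _ := by omega

theorem exists_superset_card_nbhd_inter_compIn_le (hsep : G.HasBalancedSeparators k)
    (hdeg : ∀ X : Finset V, #(G.nbhd X) ≤ #X * d) {U : Finset V} (p : ℕ) {R : Finset V}
    (hRU : R ⊆ U) (hR : G.seedExcess (k * d) U R ≤ p * (k * d)) :
    ∃ R', R ⊆ R' ∧ R' ⊆ U ∧ #R' ≤ #R + k * p ∧
      ∀ v ∈ U \ R', #(G.nbhd R' ∩ G.compIn (U \ R') v) ≤ 6 * (k * d) := by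
  induction p generalizing R with
  | zero =>
    refine ⟨R, subset_rfl, hRU, by simp, fun v hv => ?_⟩
    have : #(G.nbhd R ∩ G.compIn (U \ R) v) - 2 * (k * d) ≤ G.seedExcess (k * d) U R :=
      single_le_sum (f := fun C => #(G.nbhd R ∩ C) - 2 * (k * d)) (fun _ _ => Nat.zero_le _)
        (mem_comps.mpr ⟨v, hv, rfl⟩)
    omega
  | succ p ih =>
    by_cases hdone : ∀ v ∈ U \ R, #(G.nbhd R ∩ G.compIn (U \ R) v) ≤ 6 * (k * d)
    · exact ⟨R, subset_rfl, hRU, Nat.le_add_right _ _, hdone⟩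
    simp only [not_forall, not_le] at hdone
    obtain ⟨v₀, hv₀, hheavy⟩ := hdone
    obtain ⟨Z, hZ, hZk, hZR⟩ := exists_seedExcess_add_le hsep hdeg hv₀ hheavy
    obtain ⟨R', hRR', hR'U, hR'card, hR'⟩ :=
      ih (union_subset hRU (hZ.trans sdiff_subset)) (by rw [add_mul] at hR; omega)
    refine ⟨R', subset_union_left.trans hRR', hR'U, ?_, hR'⟩
    have := card_union_le R Z
    rw [mul_add]
    omega

end Seeds

def IsLayeringOn (G : SimpleGraph V) (U : Finset V) (g : V → ℕ) : Prop :=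
  ∀ u ∈ U, ∀ v ∈ U, G.Adj u v → g u ≤ g v + 1

def ClusteredOn {α : Type*} (G : SimpleGraph V) (U : Finset V) (f : V → α) (K : ℕ) : Prop :=
  ∀ M ⊆ U, (∀ u ∈ M, ∀ v ∈ M, f u = f v) → (∀ u ∈ M, ∀ v ∈ M, G.ReachIn M u v) → #M ≤ K

theorem clusteredOn_of_card_le {α : Type*} {U : Finset V} {K : ℕ} (f : V → α) (hU : #U ≤ K) :
    G.ClusteredOn U f K :=
  fun _ hMU _ _ => (card_le_card hMU).trans hU

noncomputable def glueLayers (G : SimpleGraph V) (A : Finset V) (gs : Finset V → V → ℕ)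
    (v : V) : ℕ :=
  if v ∈ A then gs (G.compIn A v) v + 1 else 0

section Layerings

variable {A U R : Finset V} {gs : Finset V → V → ℕ} {v w : V}

theorem glueLayers_of_mem_compIn (hw : w ∈ G.compIn A v) :
    G.glueLayers A gs w = gs (G.compIn A v) w + 1 := by
  rw [glueLayers, if_pos (compIn_subset hw), compIn_eq_of_mem hw]

theorem glueLayers_of_notMem (hv : v ∉ A) : G.glueLayers A gs v = 0 :=
  if_neg hv

theorem clusteredOn_glueLayers {K : ℕ} (hRK : #R ≤ K)
    (hgs : ∀ C ∈ G.comps (U \ R), G.ClusteredOn C (gs C) K) :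
    G.ClusteredOn U (G.glueLayers (U \ R) gs) K := by
  intro M hMU hconst hconn
  obtain rfl | ⟨u, hu⟩ := M.eq_empty_or_nonempty
  · exact (card_empty).trans_le (Nat.zero_le K)
  by_cases huA : u ∈ U \ R
  · have hMA : M ⊆ U \ R := fun w hw => by
      by_contra hwA
      have := hconst u hu w hw
      rw [glueLayers_of_notMem hwA, glueLayers_of_mem_compIn (mem_compIn_self huA)] at this
      omega
    have hMC : M ⊆ G.compIn (U \ R) u := subset_compIn hMA (hconn u hu)
    refine hgs _ (mem_comps.mpr ⟨u, huA, rfl⟩) M hMC (fun a ha b hb => ?_) hconn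
    have := hconst a ha b hb
    rwa [glueLayers_of_mem_compIn (hMC ha), glueLayers_of_mem_compIn (hMC hb),
      Nat.add_right_cancel_iff] at this
  · have hMR : M ⊆ R := fun w hw => by
      by_contra hwR
      have hwA : w ∈ U \ R := mem_sdiff.mpr ⟨hMU hw, hwR⟩
      have := hconst u hu w hw
      rw [glueLayers_of_notMem huA, glueLayers_of_mem_compIn (mem_compIn_self hwA)] at this
      omega
    exact (card_le_card hMR).trans hRK

variable [Fintype V]

theorem isLayeringOn_glueLayers
    (hgs : ∀ C ∈ G.comps (U \ R), (∀ w ∈ G.nbhd R ∩ C, gs C w = 0) ∧ G.IsLayeringOn C (gs C)) :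
    G.IsLayeringOn U (G.glueLayers (U \ R) gs) := by
  intro u hu v hv huv
  by_cases huA : u ∈ U \ R
  · have hC := hgs _ (mem_comps.mpr ⟨u, huA, rfl⟩)
    have hu' := glueLayers_of_mem_compIn (G := G) (gs := gs) (mem_compIn_self huA)
    by_cases hvA : v ∈ U \ R
    · have hvC : v ∈ G.compIn (U \ R) u := mem_compIn_of_adj (mem_compIn_self huA) huv hvA
      rw [hu', glueLayers_of_mem_compIn hvC]
      exact Nat.add_le_add_right (hC.2 u (mem_compIn_self huA) v hvC huv) 1
    · have hvR : v ∈ R := by simpa [hv] using hvA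
      have hu0 := hC.1 u (mem_inter.mpr ⟨mem_nbhd.mpr ⟨v, hvR, huv.symm⟩, mem_compIn_self huA⟩)
      rw [hu', glueLayers_of_notMem hvA, hu0]
  · rw [glueLayers_of_notMem huA]
    exact Nat.zero_le _

variable {k d : ℕ}

theorem exists_layering (hsep : G.HasBalancedSeparators k)
    (hdeg : ∀ X : Finset V, #(G.nbhd X) ≤ #X * d) (hk : 0 < k) (hd : 0 < d) (U : Finset V) :
    ∀ S ⊆ U, #S ≤ 6 * (k * d) → ∃ g : V → ℕ,
      (∀ v ∈ S, g v = 0) ∧ G.IsLayeringOn U g ∧ G.ClusteredOn U g (14 * (k * d)) := by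
  induction U using Finset.strongInduction with
  | H U ih =>
  intro S hSU hS
  have hkd : 1 ≤ k * d := Nat.mul_pos hk hd
  by_cases hsmall : #U ≤ 14 * (k * d)
  · exact ⟨0, fun _ _ => rfl, fun _ _ _ _ _ => Nat.zero_le _, clusteredOn_of_card_le _ hsmall⟩
  -- The extra vertex `u₀` makes the level `R` nonempty, so the components below are smaller.
  obtain ⟨u₀, hu₀⟩ : U.Nonempty := card_pos.mp (by omega)
  have hR₀ : #(insert u₀ S) ≤ 6 * (k * d) + 1 := (card_insert_le _ _).trans (by omega)
  have hexcess : G.seedExcess (k * d) U (insert u₀ S) ≤ 7 * d * (k * d) :=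
    calc G.seedExcess (k * d) U (insert u₀ S) ≤ #(insert u₀ S) * d :=
          (seedExcess_le_card_nbhd _ _ _).trans (hdeg _)
      _ ≤ (6 * (k * d) + 1) * d := Nat.mul_le_mul_right d hR₀
      _ ≤ 7 * d * (k * d) := by nlinarith
  obtain ⟨R, hSR, hRU, hRcard, hRseeds⟩ :=
    exists_superset_card_nbhd_inter_compIn_le hsep hdeg (7 * d) (insert_subset hu₀ hSU) hexcess
  have hpieces : ∀ C ∈ G.comps (U \ R), ∃ g : V → ℕ, (∀ w ∈ G.nbhd R ∩ C, g w = 0) ∧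
      G.IsLayeringOn C g ∧ G.ClusteredOn C g (14 * (k * d)) := by
    intro C hC
    obtain ⟨v, hv, rfl⟩ := mem_comps.mp hC
    have hsub : G.compIn (U \ R) v ⊂ U := compIn_subset.trans_ssubset
      (sdiff_ssubset hRU ⟨u₀, hSR (mem_insert_self _ _)⟩)
    exact ih _ hsub _ inter_subset_right (hRseeds v hv)
  choose! gs hgs using hpieces
  refine ⟨G.glueLayers (U \ R) gs, fun v hv => glueLayers_of_notMem ?_,
    isLayeringOn_glueLayers fun C hC => ⟨(hgs C hC).1, (hgs C hC).2.1⟩,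
    clusteredOn_glueLayers (by nlinarith) fun C hC => (hgs C hC).2.2⟩
  exact fun hvA => (mem_sdiff.mp hvA).2 (hSR (mem_insert_of_mem hv))

end Layerings

section Colourings

variable {α β : Type*} {U M : Finset V} {K : ℕ}

theorem ClusteredOn.comp_injective {f : V → α} (h : G.ClusteredOn U f K) {e : α → β}
    (he : Injective e) : G.ClusteredOn U (e ∘ f) K :=
  fun M hMU hconst hconn => h M hMU (fun u hu v hv => he (hconst u hu v hv)) hconn

theorem IsLayeringOn.eq_of_reachIn {g : V → ℕ} (hg : G.IsLayeringOn U g) (hMU : M ⊆ U)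
    (hpar : ∀ u ∈ M, ∀ v ∈ M, g u % 2 = g v % 2) {a b : V} (h : G.ReachIn M a b) :
    g a = g b := by
  obtain ⟨p, hp⟩ := h
  induction p with
  | nil => rfl
  | @cons a b c hab q ih =>
    have ha : a ∈ M := hp a (by simp)
    have hb : b ∈ M := hp b (by simp)
    have := hpar a ha b hb
    have := hg a (hMU ha) b (hMU hb) hab
    have := hg b (hMU hb) a (hMU ha) hab.symm
    rw [← ih fun x hx => hp x (by simp [hx])]
    omega

theorem ClusteredOn.parity {g : V → ℕ} (hg : G.IsLayeringOn U g) (hc : G.ClusteredOn U g K) :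
    G.ClusteredOn U (fun v => (⟨g v % 2, Nat.mod_lt _ two_pos⟩ : Fin 2)) K := by
  intro M hMU hconst hconn
  have hpar : ∀ u ∈ M, ∀ v ∈ M, g u % 2 = g v % 2 := fun u hu v hv =>
    congrArg Fin.val (hconst u hu v hv)
  exact hc M hMU (fun u hu v hv => hg.eq_of_reachIn hMU hpar (hconn u hu v hv)) hconn

theorem exists_fin_two_clusteredOn [Fintype V] {t Δ : ℕ} (htw : TreewidthLE G t)
    (hdeg : ∀ v, (G.neighborSet v).ncard ≤ Δ) (hΔ : 0 < Δ) :
    ∃ f : V → Fin 2, G.ClusteredOn univ f (14 * ((t + 1) * Δ)) := by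
  obtain ⟨g, -, hg, hc⟩ := exists_layering htw.hasBalancedSeparators (card_nbhd_le hdeg)
    t.succ_pos hΔ univ ∅ (empty_subset _) (by simp)
  exact ⟨_, hc.parity hg⟩

theorem ClusteredOn.card_image_le {W : Type*} [Fintype W] {H : SimpleGraph W} {f : W → α}
    (hf : H.ClusteredOn univ f K) (φ : V → W)
    (hφ : ∀ a b, G.Adj a b → φ a = φ b ∨ H.Adj (φ a) (φ b)) {S : Finset V}
    (hconst : ∀ a ∈ S, ∀ b ∈ S, f (φ a) = f (φ b)) (hconn : ∀ a ∈ S, ∀ b ∈ S, G.ReachIn S a b) :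
    #(S.image φ) ≤ K := by
  refine hf _ (subset_univ _) (fun x hx y hy => ?_) fun x hx y hy => ?_
  all_goals
    obtain ⟨a, ha, rfl⟩ := mem_image.mp hx
    obtain ⟨b, hb, rfl⟩ := mem_image.mp hy
  · exact hconst a ha b hb
  · exact (hconn a ha b hb).image φ hφ

theorem ClusteredOn.strongProd {V₁ V₂ : Type*} [Fintype V₁] [Fintype V₂]
    {H₁ : SimpleGraph V₁} {H₂ : SimpleGraph V₂} {f₁ : V₁ → α} {f₂ : V₂ → β} {K₁ K₂ : ℕ}
    (h₁ : H₁.ClusteredOn univ f₁ K₁) (h₂ : H₂.ClusteredOn univ f₂ K₂) :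
    (StrongProd H₁ H₂).ClusteredOn univ (fun p => (f₁ p.1, f₂ p.2)) (K₁ * K₂) := by
  rintro S - hconst hconn
  have hfst : #(S.image Prod.fst) ≤ K₁ := h₁.card_image_le Prod.fst
    (fun a b h => by rcases h with ⟨h, -⟩ | ⟨-, h⟩ | ⟨h, -⟩ <;> simp [h])
    (fun a ha b hb => (Prod.ext_iff.mp (hconst a ha b hb)).1) hconn
  have hsnd : #(S.image Prod.snd) ≤ K₂ := h₂.card_image_le Prod.snd
    (fun a b h => by rcases h with ⟨-, h⟩ | ⟨h, -⟩ | ⟨-, h⟩ <;> simp [h])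
    (fun a ha b hb => (Prod.ext_iff.mp (hconst a ha b hb)).2) hconn
  calc #S ≤ #(S.image Prod.fst ×ˢ S.image Prod.snd) :=
        card_le_card fun p hp => mem_product.mpr ⟨mem_image_of_mem _ hp, mem_image_of_mem _ hp⟩
    _ = #(S.image Prod.fst) * #(S.image Prod.snd) := card_product _ _
    _ ≤ K₁ * K₂ := Nat.mul_le_mul hfst hsnd

theorem clusterLEReal_of_clusteredOn [Fintype V] {c : ℕ} {f : V → Fin c} {b : ℝ}
    (h : G.ClusteredOn univ f K) (hK : (K : ℝ) ≤ b) : ClusterLEReal G f b :=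
  fun S hmono hconn => le_trans (Nat.cast_le.mpr (h S (subset_univ S) hmono
    fun _ hu _ hv => ReachIn.of_induce_connected hconn hu hv)) hK

end Colourings

end SimpleGraph

/-- There is an absolute constant `C` such that for all positive `t, Δ` and graphs
`H₁, H₂` of treewidth at most `t` and maximum degree at most `Δ`, the strong product
`H₁ ⊠ H₂` has a 4-colouring with every monochromatic component of size at most
`C·t²·Δ²`. -/
theorem bounded_degree_four_colour :
    ∃ C : ℝ, 0 < C ∧ ∀ t Δ : ℕ, 0 < t → 0 < Δ →
      ∀ (V₁ V₂ : Type) [Fintype V₁] [Fintype V₂]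
        (H₁ : SimpleGraph V₁) (H₂ : SimpleGraph V₂),
        TreewidthLE H₁ t → TreewidthLE H₂ t →
        (∀ v : V₁, (H₁.neighborSet v).ncard ≤ Δ) →
        (∀ v : V₂, (H₂.neighborSet v).ncard ≤ Δ) →
        ∃ f : V₁ × V₂ → Fin 4, ClusterLEReal (StrongProd H₁ H₂) f
          (C * (t : ℝ) ^ 2 * (Δ : ℝ) ^ 2) := by
  refine ⟨784, by norm_num, fun t Δ ht hΔ V₁ V₂ _ _ H₁ H₂ htw₁ htw₂ hdeg₁ hdeg₂ => ?_⟩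
  obtain ⟨f₁, hf₁⟩ := exists_fin_two_clusteredOn htw₁ hdeg₁ hΔ
  obtain ⟨f₂, hf₂⟩ := exists_fin_two_clusteredOn htw₂ hdeg₂ hΔ
  refine ⟨finProdFinEquiv ∘ fun p => (f₁ p.1, f₂ p.2), clusterLEReal_of_clusteredOn
    ((hf₁.strongProd hf₂).comp_injective finProdFinEquiv.injective) ?_⟩
  have hK : 14 * ((t + 1) * Δ) ≤ 28 * t * Δ := by nlinarith
  calc ((14 * ((t + 1) * Δ) * (14 * ((t + 1) * Δ)) : ℕ) : ℝ)
      ≤ ((28 * t * Δ * (28 * t * Δ) : ℕ) : ℝ) := by exact_mod_cast Nat.mul_le_mul hK hK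
    _ = 784 * (t : ℝ) ^ 2 * (Δ : ℝ) ^ 2 := by push_cast; ring
end
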